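/- Let σ be the n-cycle (n, n-1, ..., 1) and let φ: G₁ⁿ → G₁ⁿ be defined by (g₁,...,gₙ) ↦ (φₙ(gₙ), φ₁(g₁), ..., φₙ₋₁(gₙ₋₁)) for automorphisms φᵢ of a group G₁. Then Fix(φ) = {(g, φ₁(g), φ₂φ₁(g), ..., φₙ₋₁⋯φ₁(g)) : g ∈ Fix(φₙ⋯φ₁)}, and in particular Fix(φ) is isomorphic to Fix(φₙ∘⋯∘φ₁). -/

import Mathlib

/-- The fixed subgroup of an endomorphism of a group. -/
def fixedSubgroup {G : Type*} [Group G] (φ : G →* G) : Subgroup G where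
  carrier := {g : G | φ g = g}
  one_mem' := map_one φ
  mul_mem' := by
    intro x y hx hy
    simp only [Set.mem_setOf_eq, map_mul] at *
    rw [hx, hy]
  inv_mem' := by
    intro x hx
    simp only [Set.mem_setOf_eq, map_inv] at *
    rw [hx]

/-- The automorphism of `G₁ⁿ` given by applying `f i` coordinate-wise and then
cyclically shifting the coordinates: `(g₁, …, gₙ) ↦ (fₙ gₙ, f₁ g₁, …, f_{n-1} g_{n-1})`. -/
def cycShift {G₁ : Type*} [Group G₁] (n : ℕ) [NeZero n] (f : Fin n → (G₁ ≃* G₁)) :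
    (Fin n → G₁) →* (Fin n → G₁) where
  toFun g i := f (i - 1) (g (i - 1))
  map_one' := by funext i; simp
  map_mul' := by intro g h; funext i; simp

/-!
A fixed point `g` of the twisted shift satisfies `g (j + 1) = f j (g j)` around the cycle, so it
is determined by `x = g 0` through `g i = c i x`, and closing the cycle forces `c n x = x`.
Hence `Fix φ` is the image of `Fix (c n)` under the homomorphism `x ↦ (c i x)ᵢ`, which is
injective because its `0`-th coordinate is `c 0 = id`.
-/

theorem mem_fixedSubgroup {G : Type*} [Group G] {φ : G →* G} {g : G} :
    g ∈ fixedSubgroup φ ↔ φ g = g :=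
  Iff.rfl

@[simp]
theorem cycShift_apply {G : Type*} [Group G] {n : ℕ} [NeZero n] (f : Fin n → G ≃* G)
    (g : Fin n → G) (i : Fin n) : cycShift n f g i = f (i - 1) (g (i - 1)) :=
  rfl

theorem cycShift_eq_self_iff {G : Type*} [Group G] {n : ℕ} [NeZero n] (f : Fin n → G ≃* G)
    {g : Fin n → G} : cycShift n f g = g ↔ ∀ j, g (j + 1) = f j (g j) := by
  refine ⟨fun hg j => ?_, fun hg => funext fun i => ?_⟩
  · simpa using (congrFun hg (j + 1)).symm
  · simpa using (hg (i - 1)).symm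

theorem cyclic_recurrence_iff {α : Type*} {n : ℕ} [NeZero n] (f : Fin n → α → α)
    (c : ℕ → α → α) (hc0 : ∀ x, c 0 x = x) (hcs : ∀ (k : Fin n) x, c (k + 1) x = f k (c k x))
    {g : Fin n → α} :
    (∀ j, g (j + 1) = f j (g j)) ↔ ∃ x, c n x = x ∧ ∀ i : Fin n, g i = c i x := by
  obtain ⟨m, rfl⟩ := Nat.exists_eq_succ_of_ne_zero (NeZero.ne n)
  constructor
  · intro hg
    have hgc : ∀ i : Fin (m + 1), g i = c i (g 0) := by
      refine Fin.induction (hc0 _).symm fun i ih => ?_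
      rw [Fin.val_succ, ← Fin.coeSucc_eq_succ, hg, ih]
      exact (hcs i.castSucc _).symm
    refine ⟨g 0, ?_, hgc⟩
    calc c (m + 1) (g 0) = f (Fin.last m) (g (Fin.last m)) := by
          rw [hgc (Fin.last m)]; exact hcs (Fin.last m) _
      _ = g 0 := by rw [← hg, Fin.last_add_one]
  · rintro ⟨x, hx, hgx⟩ j
    rw [hgx, hgx]
    induction j using Fin.lastCases with
    | last => rw [Fin.last_add_one, Fin.val_zero, hc0]; exact hx.symm.trans (hcs (Fin.last m) x)
    | cast i => rw [Fin.coeSucc_eq_succ]; exact hcs i.castSucc x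

theorem fixedSubgroup_cycShift_eq_map {G : Type*} [Group G] {n : ℕ} [NeZero n]
    (f : Fin n → G ≃* G) (c : ℕ → G →* G) (hc0 : ∀ x, c 0 x = x)
    (hcs : ∀ (k : Fin n) x, c (k + 1) x = f k (c k x)) :
    fixedSubgroup (cycShift n f) =
      (fixedSubgroup (c n)).map (MonoidHom.pi fun i : Fin n => c i) := by
  ext g
  rw [mem_fixedSubgroup, cycShift_eq_self_iff,
    cyclic_recurrence_iff (fun k => f k) (fun k => c k) hc0 hcs, Subgroup.mem_map]
  simp only [mem_fixedSubgroup, funext_iff, MonoidHom.pi_apply, eq_comm (a := g _)]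

theorem fix_cyclic_shift {G₁ : Type*} [Group G₁] (n : ℕ) [NeZero n]
    (f : Fin n → (G₁ ≃* G₁)) (c : ℕ → (G₁ →* G₁))
    (hc0 : c 0 = MonoidHom.id G₁)
    (hcs : ∀ k : Fin n, c (k.val + 1) = (f k).toMonoidHom.comp (c k.val)) :
    (∀ g : Fin n → G₁, cycShift n f g = g ↔
      ∃ x : G₁, c n x = x ∧ ∀ i : Fin n, g i = c i.val x) ∧
    Nonempty (↥(fixedSubgroup (cycShift n f)) ≃* ↥(fixedSubgroup (c n))) := by
  have hc0' : ∀ x, c 0 x = x := fun x => by rw [hc0]; rfl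
  have hcs' : ∀ (k : Fin n) x, c (k + 1) x = f k (c k x) := fun k x => by rw [hcs k]; rfl
  have hinj : Function.Injective (MonoidHom.pi fun i : Fin n => c i) := fun x y hxy => by
    simpa [hc0'] using congrFun hxy 0
  refine ⟨fun g => cycShift_eq_self_iff f |>.trans <|
    cyclic_recurrence_iff (fun k => f k) (fun k => c k) hc0' hcs', ⟨?_⟩⟩
  exact (MulEquiv.subgroupCongr (fixedSubgroup_cycShift_eq_map f c hc0' hcs')).trans
    ((fixedSubgroup (c n)).equivMapOfInjective _ hinj).symm
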